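/- Let G be a graph that is vertex-critical with respect to the property χ(G) > Δ₂(G) + 3 (i.e., G satisfies this property but no proper induced subgraph does). Then G contains no clique cutset. -/
import Mathlib


open SimpleGraph

variable {V : Type*}

/-- The codegree of two vertices: the number of their common neighbors. -/
noncomputable def codeg (H : SimpleGraph V) (u v : V) : ℕ :=
  Nat.card {x : V // H.Adj u x ∧ H.Adj v x}

/-- The maximum codegree `Δ₂`: the maximum of `codeg` over pairs of distinct vertices. -/
noncomputable def maxCodeg (H : SimpleGraph V) : ℕ :=
  sSup {n | ∃ u v : V, u ≠ v ∧ codeg H u v = n}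

/-- The anti-codegree: the number of vertices distinct from `u, v` adjacent to neither. -/
noncomputable def acodeg (H : SimpleGraph V) (u v : V) : ℕ :=
  Nat.card {x : V // x ≠ u ∧ x ≠ v ∧ ¬H.Adj u x ∧ ¬H.Adj v x}

/-- The maximum anti-codegree over pairs of distinct vertices. -/
noncomputable def macodeg (H : SimpleGraph V) : ℕ :=
  sSup {n | ∃ u v : V, u ≠ v ∧ acodeg H u v = n}

/-- A matching, as a set of pairwise vertex-disjoint edges. -/
def IsMatchingSet (H : SimpleGraph V) (M : Finset (Sym2 V)) : Prop :=
  (∀ e ∈ M, e ∈ H.edgeSet) ∧ ∀ e ∈ M, ∀ f ∈ M, e ≠ f → ∀ v : V, v ∈ e → v ∉ f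

/-- The matching number: maximum size of a matching. -/
noncomputable def matchingNumber (H : SimpleGraph V) : ℕ :=
  sSup {n | ∃ M : Finset (Sym2 V), IsMatchingSet H M ∧ M.card = n}

/-- The clique cover number: the least `n` such that `V` can be partitioned into `n` cliques. -/
noncomputable def cliqueCoverNumber (H : SimpleGraph V) : ℕ :=
  sInf {n | ∃ c : V → Fin n, ∀ u v : V, c u = c v → u = v ∨ H.Adj u v}

/-- A graph is claw-free if no neighborhood contains three pairwise nonadjacent vertices. -/
def ClawFree (G : SimpleGraph V) : Prop :=
  ∀ v a b c : V, G.Adj v a → G.Adj v b → G.Adj v c →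
    a ≠ b → a ≠ c → b ≠ c → G.Adj a b ∨ G.Adj a c ∨ G.Adj b c

/-- Maximum edge-codegree `Δ_e`: maximum codegree over pairs of adjacent vertices. -/
noncomputable def maxEdgeCodeg (G : SimpleGraph V) : ℕ :=
  sSup {n | ∃ u v : V, G.Adj u v ∧ codeg G u v = n}

private lemma codeg_le_card [Fintype V] (H : SimpleGraph V) (u v : V) :
    codeg H u v ≤ Fintype.card V := by
  classical
  have : Nat.card {x : V // H.Adj u x ∧ H.Adj v x} ≤ Nat.card V :=
    Nat.card_le_card_of_injective _ Subtype.val_injective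
  simpa [codeg, Nat.card_eq_fintype_card] using this

private lemma codeg_le_maxCodeg [Fintype V] (H : SimpleGraph V) {u v : V} (h : u ≠ v) :
    codeg H u v ≤ maxCodeg H := by
  apply le_csSup
  · exact ⟨Fintype.card V, fun n ⟨a, b, _, hab⟩ => hab ▸ codeg_le_card H a b⟩
  · exact ⟨u, v, h, rfl⟩

private lemma maxCodeg_induce_le [Fintype V] (G : SimpleGraph V) (s : Set V) :
    maxCodeg (G.induce s) ≤ maxCodeg G := by
  classical
  apply csSup_le'
  rintro n ⟨u, v, huv, rfl⟩
  have h1 : codeg (G.induce s) u v ≤ codeg G u.1 v.1 := by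
    have : Nat.card {x : s // (G.induce s).Adj u x ∧ (G.induce s).Adj v x} ≤
        Nat.card {x : V // G.Adj u.1 x ∧ G.Adj v.1 x} := by
      apply Nat.card_le_card_of_injective
        (fun x => ⟨x.1.1, x.2.1, x.2.2⟩)
      intro x y hxy
      simp only [Subtype.mk.injEq] at hxy
      exact Subtype.ext (Subtype.ext hxy)
    simpa [codeg] using this
  exact h1.trans (codeg_le_maxCodeg G (fun h => huv (Subtype.ext h)))

private lemma exists_perm_comp {α K : Type*} [Finite α] {f g : K → α}
    (hf : Function.Injective f) (hg : Function.Injective g) :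
    ∃ σ : Equiv.Perm α, ∀ k, σ (f k) = g k := by
  classical
  let e : {x // x ∈ Set.range f} ≃ {x // x ∈ Set.range g} :=
    (Equiv.ofInjective f hf).symm.trans (Equiv.ofInjective g hg)
  refine ⟨e.extendSubtype, fun k => ?_⟩
  rw [Equiv.extendSubtype_apply_of_mem e (f k) ⟨k, rfl⟩]
  simp [e]

/-- A connected graph that is vertex-critical for the property
`χ(G) > Δ₂(G) + 3` contains no clique cutset. -/
theorem stmt_12 [Fintype V] (G : SimpleGraph V) (hconn : G.Connected)
    (hcrit : ((maxCodeg G + 3 : ℕ) : ℕ∞) < G.chromaticNumber)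
    (hmin : ∀ s : Set V, s ≠ Set.univ →
      (G.induce s).chromaticNumber ≤ ((maxCodeg (G.induce s) + 3 : ℕ) : ℕ∞)) :
    ¬ ∃ K : Set V, G.IsClique K ∧ ¬ (G.induce Kᶜ).Connected := by
  classical
  rintro ⟨K, hK, hdis⟩
  set N := maxCodeg G + 3 with hNdef
  suffices h : G.Colorable N from (hcrit.trans_le h.chromaticNumber_le).false
  by_cases hKc : (Kᶜ : Set V).Nonempty
  · -- K is a proper cutset: Kᶜ is nonempty and disconnected
    have hne : Nonempty (Kᶜ : Set V) := hKc.to_subtype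
    have hnp : ¬ (G.induce Kᶜ).Preconnected := by
      intro hp; exact hdis ⟨hp⟩
    rw [SimpleGraph.Preconnected] at hnp
    push_neg at hnp
    obtain ⟨a, b, hab⟩ := hnp
    set A : Set V := {v | ∃ h : v ∈ Kᶜ, (G.induce Kᶜ).Reachable a ⟨v, h⟩} with hA
    set B : Set V := Kᶜ \ A with hB
    have haA : (a : V) ∈ A := ⟨a.2, by rw [Subtype.coe_eta]⟩
    have hbB : (b : V) ∈ B := by
      refine ⟨b.2, fun h => ?_⟩
      obtain ⟨hb, hr⟩ := h
      rw [Subtype.coe_eta] at hr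
      exact hab hr
    have hAK : ∀ v ∈ A, v ∈ Kᶜ := fun v hv => hv.1
    -- no edges between A and B
    have hsep : ∀ u w : V, u ∈ A → w ∈ B → ¬ G.Adj u w := by
      intro u w hu hw hadj
      obtain ⟨huK, hur⟩ := hu
      have : (G.induce Kᶜ).Adj ⟨u, huK⟩ ⟨w, hw.1⟩ := hadj
      exact hw.2 ⟨hw.1, hur.trans this.reachable⟩
    set S₁ : Set V := K ∪ A with hS₁
    set S₂ : Set V := K ∪ B with hS₂
    have hS₁ne : S₁ ≠ Set.univ := by
      intro h
      have : (b : V) ∈ S₁ := h ▸ Set.mem_univ _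
      rcases this with h' | h'
      · exact b.2 h'
      · exact hbB.2 h'
    have hS₂ne : S₂ ≠ Set.univ := by
      intro h
      have : (a : V) ∈ S₂ := h ▸ Set.mem_univ _
      rcases this with h' | h'
      · exact a.2 h'
      · exact h'.2 haA
    have hcov : ∀ v : V, v ∉ S₁ → v ∈ B := by
      intro v hv
      have hvK : v ∈ Kᶜ := fun h => hv (Or.inl h)
      exact ⟨hvK, fun h => hv (Or.inr h)⟩
    -- colorings
    have hcol : ∀ s : Set V, s ≠ Set.univ → (G.induce s).Colorable N := by
      intro s hs
      have h1 := (hmin s hs).trans (by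
        exact_mod_cast Nat.cast_le.mpr (Nat.add_le_add_right (maxCodeg_induce_le G s) 3))
      exact chromaticNumber_le_iff_colorable.mp h1
    obtain ⟨c₁⟩ := hcol S₁ hS₁ne
    obtain ⟨c₂⟩ := hcol S₂ hS₂ne
    -- restrictions to K are injective
    have hinj : ∀ (s : Set V) (hKs : K ⊆ s) (c : (G.induce s).Coloring (Fin N)),
        Function.Injective (fun k : K => c ⟨k.1, hKs k.2⟩) := by
      intro s hKs c k k' h
      by_contra hne
      have hkk : (k : V) ≠ (k' : V) := fun h' => hne (Subtype.ext h')
      have hadj : (G.induce s).Adj ⟨k.1, hKs k.2⟩ ⟨k'.1, hKs k'.2⟩ := hK k.2 k'.2 hkk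
      exact c.valid hadj h
    obtain ⟨σ, hσ⟩ := exists_perm_comp
      (hinj S₂ Set.subset_union_left c₂) (hinj S₁ Set.subset_union_left c₁)
    -- the combined coloring
    set c : V → Fin N := fun v =>
      if h : v ∈ S₁ then c₁ ⟨v, h⟩ else σ (c₂ ⟨v, Or.inr (hcov v h)⟩) with hc
    have key : ∀ u w : V, G.Adj u w → u ∈ S₁ → w ∉ S₁ → c u ≠ c w := by
      intro u w hadj hu hw
      have hwB : w ∈ B := hcov w hw
      rcases hu with huK | huA
      · -- u ∈ K, so u ∈ S₂ as well
        have hc2 : c u = σ (c₂ ⟨u, Or.inl huK⟩) := by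
          simp only [hc]; beta_reduce
          have huS₁ : u ∈ S₁ := Or.inl huK
          rw [dif_pos huS₁]
          exact (hσ ⟨u, huK⟩).symm
        rw [hc2]
        simp only [hc]; beta_reduce
        rw [dif_neg hw]
        intro h
        have h2 := σ.injective h
        have hadj2 : (G.induce S₂).Adj ⟨u, Or.inl huK⟩ ⟨w, Or.inr hwB⟩ := hadj
        exact c₂.valid hadj2 h2
      · exact absurd hadj (hsep u w huA hwB)
    refine ⟨Coloring.mk c ?_⟩
    intro u w hadj
    by_cases hu : u ∈ S₁ <;> by_cases hw : w ∈ S₁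
    · simp only [hc]; beta_reduce; rw [dif_pos hu, dif_pos hw]
      exact c₁.valid (show (G.induce S₁).Adj ⟨u, hu⟩ ⟨w, hw⟩ from hadj)
    · exact key u w hadj hu hw
    · exact (key w u hadj.symm hw hu).symm
    · simp only [hc]; beta_reduce; rw [dif_neg hu, dif_neg hw]
      intro h
      exact c₂.valid (show (G.induce S₂).Adj ⟨u, _⟩ ⟨w, _⟩ from hadj) (σ.injective h)
  · -- Kᶜ is empty: G is complete
    rw [Set.not_nonempty_iff_eq_empty] at hKc
    have hKu : K = Set.univ := by
      have := congrArg compl hKc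
      simpa using this
    subst hKu
    by_cases hcard : 2 ≤ Fintype.card V
    · obtain ⟨u, v, huv⟩ := Fintype.exists_pair_of_one_lt_card hcard
      have hsub : Fintype.card V ≤ codeg G u v + 2 := by
        have inj2 : Function.Injective
            (fun x : {x : V // ¬(G.Adj u x ∧ G.Adj v x)} => decide (x.1 = u)) := by
          intro x y h
          have hx : x.1 = u ∨ x.1 = v := by
            by_contra hc
            push_neg at hc
            exact x.2 ⟨hK trivial trivial (Ne.symm hc.1), hK trivial trivial (Ne.symm hc.2)⟩
          have hy : y.1 = u ∨ y.1 = v := by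
            by_contra hc
            push_neg at hc
            exact y.2 ⟨hK trivial trivial (Ne.symm hc.1), hK trivial trivial (Ne.symm hc.2)⟩
          have h' : decide (x.1 = u) = decide (y.1 = u) := h
          by_cases hxu : x.1 = u
          · have : y.1 = u := by
              by_contra hyu
              simp [hxu, hyu] at h'
            exact Subtype.ext (hxu.trans this.symm)
          · have hxv : x.1 = v := hx.resolve_left hxu
            have hyu : y.1 ≠ u := by
              intro hyu
              simp [hxu, hyu] at h'
            have hyv : y.1 = v := hy.resolve_left hyu
            exact Subtype.ext (hxv.trans hyv.symm)
        have h2 : Fintype.card {x : V // ¬(G.Adj u x ∧ G.Adj v x)} ≤ 2 := by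
          have := Fintype.card_le_of_injective _ inj2
          simpa using this
        have h3 := Fintype.card_subtype_compl (fun x : V => G.Adj u x ∧ G.Adj v x)
        have h4 : codeg G u v = Fintype.card {x : V // G.Adj u x ∧ G.Adj v x} := by
          simp [codeg, Nat.card_eq_fintype_card]
        omega
      have : Fintype.card V ≤ N := by
        have := codeg_le_maxCodeg G huv
        omega
      exact G.colorable_of_fintype.mono this
    · exact G.colorable_of_fintype.mono (by omega)
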